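/- arXiv:math/0310137 — 5 statements merged into one kernel-verified Lean document; each statement's English description precedes it below -/
import Mathlib

section
/- Let k be an algebraically closed field of characteristic p > 0 and let G₀ be a nontrivial finite p-subgroup of Aut_k(k[[x]]), with higher ramification groups G_i := {σ ∈ G₀ : ν_x(σ(x) − x) ≥ i+1} and ramification jumps m_0 < m_1 < ... < m_{n−1} (the integers j with G_j ≠ G_{j+1}). Then for every j ∈ {1, ..., n−1} one has m_j ≡ m_0 (mod p). -/
/-!
Every element of a `p`-group of automorphisms of `k⟦x⟧` is tangent to the identity: its linear
coefficient is a `p`-power root of unity, hence `1` in characteristic `p`. For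
`σ(x) = x + α x^(a+1) + …` and `τ(x) = x + β x^(b+1) + …` with `a, b ≥ 1`, expanding
`σ(τ(x)) - τ(σ(x))` gives `(b - a) α β x^(a+b+1) + O(x^(a+b+2))`. Take `τ` at the largest jump `M`
and `σ` at any jump `a`: their commutator then lies in `G_(M+1) = 1`, so they commute, and
`(M - a) α β = 0` in `k` forces `M ≡ a (mod p)`.
-/

open PowerSeries

/-- The `i`-th higher ramification set of a subgroup `G₀` of `Aut_k(k[[x]])`:
the automorphisms `σ ∈ G₀` with `ν_x(σ(x) - x) ≥ i + 1`. -/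
def ramificationSet {k : Type*} [Field k]
    (G₀ : Subgroup (PowerSeries k ≃ₐ[k] PowerSeries k)) (i : ℕ) :
    Set (PowerSeries k ≃ₐ[k] PowerSeries k) :=
  {σ | σ ∈ G₀ ∧ ((i : ℕ∞) + 1) ≤ (σ X - X).order}

/-- The ramification jumps of `G₀`, i.e. the integers `j` with `G_j ≠ G_{j+1}`. -/
def ramificationJumps {k : Type*} [Field k]
    (G₀ : Subgroup (PowerSeries k ≃ₐ[k] PowerSeries k)) : Set ℕ :=
  {j : ℕ | ramificationSet G₀ j ≠ ramificationSet G₀ (j + 1)}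

section CommRing

variable {R : Type*} [CommRing R]

theorem pow_add_two_dvd_add_pow_succ_sub {x A : R} {a : ℕ} (ha : 1 ≤ a) (hA : x ^ (a + 1) ∣ A)
    (n : ℕ) : x ^ (n + a + 2) ∣ (x + A) ^ (n + 1) - x ^ (n + 1) - (n + 1) * x ^ n * A := by
  induction n with
  | zero => simp
  | succ n ih =>
    obtain ⟨c, rfl⟩ := Nat.exists_eq_add_of_le ha
    have hsplit :
        (x + A) ^ (n + 1 + 1) - x ^ (n + 1 + 1) - (((n + 1 : ℕ) : R) + 1) * x ^ (n + 1) * A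
          = (x + A) * ((x + A) ^ (n + 1) - x ^ (n + 1) - (n + 1) * x ^ n * A)
            + (n + 1) * x ^ n * A ^ 2 := by
      push_cast
      ring
    have hx : x ∣ x + A := dvd_add dvd_rfl ((dvd_pow_self x (by omega)).trans hA)
    have hsq : x ^ (n + (1 + c) + 2 + 1) ∣ (n + 1) * x ^ n * A ^ 2 := by
      obtain ⟨B, rfl⟩ := hA
      exact Dvd.intro ((n + 1) * x ^ c * B ^ 2) (by ring)
    rw [hsplit, show n + 1 + (1 + c) + 2 = n + (1 + c) + 2 + 1 by ring]
    refine dvd_add ?_ hsq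
    rw [pow_succ']
    exact mul_dvd_mul hx ih

namespace PowerSeries

theorem X_pow_dvd_map_sub_map {F G : Type*} [FunLike F R⟦X⟧ R⟦X⟧] [AlgHomClass F R R⟦X⟧ R⟦X⟧]
    [FunLike G R⟦X⟧ R⟦X⟧] [AlgHomClass G R R⟦X⟧ R⟦X⟧] {φ : F} {ψ : G} (hψ : X ∣ ψ X) {r : ℕ}
    (h : X ^ r ∣ φ X - ψ X) (f : R⟦X⟧) : X ^ r ∣ φ f - ψ f := by
  induction r generalizing f with
  | zero => simp
  | succ r ih =>
    obtain ⟨g, hg⟩ : X ∣ f - C (constantCoeff f) := by simp [X_dvd_iff]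
    have hC : ∀ c : R, φ (C c) = ψ (C c) := fun c => by
      rw [← algebraMap_eq, AlgHomClass.commutes, AlgHomClass.commutes]
    have hsplit : φ f - ψ f = (φ X - ψ X) * φ g + ψ X * (φ g - ψ g) := by
      rw [show f = X * g + C (constantCoeff f) by rw [← hg]; ring]
      simp only [map_add, map_mul, hC]
      ring
    rw [hsplit]
    refine dvd_add (dvd_mul_of_dvd_left h _) ?_
    rw [pow_succ']
    exact mul_dvd_mul hψ (ih ((pow_dvd_pow X r.le_succ).trans h) g)

theorem eq_zero_of_forall_X_pow_dvd {f : R⟦X⟧} (h : ∀ r, X ^ r ∣ f) : f = 0 := by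
  ext i
  exact X_pow_dvd_iff.mp (h (i + 1)) i i.lt_succ_self

theorem X_pow_dvd_map_sub_self_sub {F : Type*} [FunLike F R⟦X⟧ R⟦X⟧]
    [AlgHomClass F R R⟦X⟧ R⟦X⟧] {σ : F} {a n : ℕ} (ha : 1 ≤ a) (hσ : X ^ (a + 1) ∣ σ X - X)
    {f : R⟦X⟧} (hf : X ^ (n + 1) ∣ f) :
    X ^ (n + a + 2) ∣
      σ f - f - C ((n + 1 : R) * coeff (n + 1) f * coeff (a + 1) (σ X - X)) * X ^ (n + a + 1) := by
  obtain ⟨g, rfl⟩ := hf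
  obtain ⟨u, hu⟩ := hσ
  have hg : X ^ (a + 1) ∣ σ g - g :=
    X_pow_dvd_map_sub_map (ψ := AlgHom.id R R⟦X⟧) dvd_rfl ⟨u, hu⟩ g
  have hconst : constantCoeff (σ g) = constantCoeff g := by
    rw [← sub_eq_zero, ← map_sub, ← X_dvd_iff]
    exact (dvd_pow_self X a.succ_ne_zero).trans hg
  have hX : X ∣ u * σ g - C (constantCoeff u * constantCoeff g) := by
    rw [X_dvd_iff, map_sub, map_mul, hconst, constantCoeff_C, sub_self]
  have hσX : σ X = X + X ^ (a + 1) * u := by rw [← hu]; ring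
  have hE := pow_add_two_dvd_add_pow_succ_sub ha (dvd_mul_right (X ^ (a + 1)) u) n
  set E := (X + X ^ (a + 1) * u) ^ (n + 1) - X ^ (n + 1)
    - ((n : R⟦X⟧) + 1) * X ^ n * (X ^ (a + 1) * u) with hE_def
  -- Modulo `X ^ (n + a + 2)` only the linear term `(n + 1) X^n (X^(a+1) u)` of the binomial
  -- expansion of `σ(X)^(n+1)` survives, and `σ g ≡ g ≡ g(0) (mod X)`.
  have hsplit : σ (X ^ (n + 1) * g) - X ^ (n + 1) * g
      - C ((n + 1 : R) * coeff (n + 1) (X ^ (n + 1) * g) * coeff (a + 1) (σ X - X))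
        * X ^ (n + a + 1)
      = E * σ g + X ^ (n + 1) * (σ g - g)
        + ((n : R⟦X⟧) + 1) * X ^ (n + a + 1)
          * (u * σ g - C (constantCoeff u * constantCoeff g)) := by
    rw [hE_def, hu, map_mul, map_pow, hσX]
    simp only [coeff_X_pow_mul', le_refl, if_true, Nat.sub_self,
      coeff_zero_eq_constantCoeff_apply, map_mul, map_add, map_natCast, map_one]
    ring
  rw [hsplit]
  refine dvd_add (dvd_add (dvd_mul_of_dvd_left hE _) ?_) ?_
  · rw [show n + a + 2 = n + 1 + (a + 1) by ring, pow_add]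
    exact mul_dvd_mul_left _ hg
  · rw [pow_succ]
    exact mul_dvd_mul (dvd_mul_left _ _) hX

theorem X_pow_dvd_mul_apply_X_sub_mul_apply_X {σ τ : R⟦X⟧ ≃ₐ[R] R⟦X⟧} {a b : ℕ} (ha : 1 ≤ a)
    (hb : 1 ≤ b) (hσ : X ^ (a + 1) ∣ σ X - X) (hτ : X ^ (b + 1) ∣ τ X - X) :
    X ^ (a + b + 2) ∣ (σ * τ) X - (τ * σ) X
      - C (((b : R) - a) * coeff (a + 1) (σ X - X) * coeff (b + 1) (τ X - X))
        * X ^ (a + b + 1) := by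
  have hστ := X_pow_dvd_map_sub_self_sub ha hσ hτ
  have hτσ := X_pow_dvd_map_sub_self_sub hb hτ hσ
  rw [add_comm b a] at hστ
  convert dvd_sub hστ hτσ using 1
  simp only [AlgEquiv.mul_apply, map_sub, map_mul, map_add, map_natCast, map_one]
  ring

theorem eq_one_of_apply_X_eq_X {σ : R⟦X⟧ ≃ₐ[R] R⟦X⟧} (h : σ X = X) : σ = 1 := by
  refine AlgEquiv.ext fun f => sub_eq_zero.mp <| eq_zero_of_forall_X_pow_dvd fun r => ?_
  exact X_pow_dvd_map_sub_map (φ := σ) (ψ := AlgHom.id R R⟦X⟧) dvd_rfl (by simp [h]) f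

end PowerSeries

end CommRing

namespace PowerSeries

variable {k : Type*} [Field k]

theorem X_dvd_apply_X (σ : k⟦X⟧ ≃ₐ[k] k⟦X⟧) : X ∣ σ X := by
  rw [X_dvd_iff]
  by_contra h
  have hX : IsUnit (X : k⟦X⟧) := by
    simpa using (isUnit_iff_constantCoeff.mpr (isUnit_iff_ne_zero.mpr h)).map σ.symm
  simpa using isUnit_constantCoeff _ hX

theorem constantCoeff_algEquiv_apply (σ : k⟦X⟧ ≃ₐ[k] k⟦X⟧) (f : k⟦X⟧) :
    constantCoeff (σ f) = constantCoeff f := by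
  rw [← sub_eq_zero, ← map_sub, ← X_dvd_iff]
  simpa using X_pow_dvd_map_sub_map (ψ := AlgHom.id k k⟦X⟧) (r := 1) dvd_rfl
    (by simpa using X_dvd_apply_X σ) f

noncomputable def linearCoeff : (k⟦X⟧ ≃ₐ[k] k⟦X⟧) →* k where
  toFun σ := coeff 1 (σ X)
  map_one' := coeff_one_X
  map_mul' σ τ := by
    obtain ⟨u, hu⟩ := X_dvd_apply_X σ
    obtain ⟨v, hv⟩ := X_dvd_apply_X τ
    simp only [AlgEquiv.mul_apply, hv, hu, map_mul, mul_assoc, coeff_succ_X_mul,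
      coeff_zero_eq_constantCoeff_apply, constantCoeff_algEquiv_apply]

theorem X_sq_dvd_apply_X_sub_X {p : ℕ} [Fact p.Prime] [CharP k p]
    {G₀ : Subgroup (k⟦X⟧ ≃ₐ[k] k⟦X⟧)} (hpG : IsPGroup p G₀) {σ : k⟦X⟧ ≃ₐ[k] k⟦X⟧}
    (hσ : σ ∈ G₀) : X ^ 2 ∣ σ X - X := by
  obtain ⟨r, hr⟩ := hpG ⟨σ, hσ⟩
  have hpow : linearCoeff σ ^ (p ^ r * 1) = 1 := by
    simpa using congrArg (linearCoeff.comp G₀.subtype) hr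
  rw [ExpChar.pow_prime_pow_mul_eq_one_iff, pow_one] at hpow
  have hlin : coeff 1 (σ X) = 1 := hpow
  rw [X_pow_dvd_iff]
  intro i hi
  interval_cases i
  · simpa using constantCoeff_algEquiv_apply σ X
  · simp [hlin]

end PowerSeries

section Ramification

variable {k : Type*} [Field k] {G₀ : Subgroup (k⟦X⟧ ≃ₐ[k] k⟦X⟧)}

theorem mem_ramificationSet_iff {i : ℕ} {σ : k⟦X⟧ ≃ₐ[k] k⟦X⟧} :
    σ ∈ ramificationSet G₀ i ↔ σ ∈ G₀ ∧ X ^ (i + 1) ∣ σ X - X := by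
  rw [pow_dvd_iff_le_emultiplicity, ← order_eq_emultiplicity_X]
  simp [ramificationSet]

theorem ramificationSet_succ_subset (i : ℕ) :
    ramificationSet G₀ (i + 1) ⊆ ramificationSet G₀ i := fun σ hσ => by
  rw [mem_ramificationSet_iff] at hσ ⊢
  exact ⟨hσ.1, (pow_dvd_pow X (by omega)).trans hσ.2⟩

theorem exists_coeff_ne_zero_of_mem_ramificationJumps {a : ℕ} (ha : a ∈ ramificationJumps G₀) :
    ∃ σ ∈ G₀, X ^ (a + 1) ∣ σ X - X ∧ coeff (a + 1) (σ X - X) ≠ 0 := by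
  obtain ⟨σ, hσa, hσa'⟩ := Set.exists_of_ssubset
    ((ramificationSet_succ_subset a).ssubset_of_ne (Ne.symm ha))
  rw [mem_ramificationSet_iff] at hσa hσa'
  refine ⟨σ, hσa.1, hσa.2, fun h => hσa' ⟨hσa.1, X_pow_dvd_iff.mpr fun i hi => ?_⟩⟩
  rcases Nat.lt_succ_iff_lt_or_eq.mp hi with hi | rfl
  · exact X_pow_dvd_iff.mp hσa.2 i hi
  · exact h

theorem one_le_of_mem_ramificationJumps {p : ℕ} [Fact p.Prime] [CharP k p]
    (hpG : IsPGroup p G₀) {a : ℕ} (ha : a ∈ ramificationJumps G₀) : 1 ≤ a := by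
  obtain ⟨σ, hσ, -, hσa⟩ := exists_coeff_ne_zero_of_mem_ramificationJumps ha
  by_contra! h
  obtain rfl : a = 0 := by omega
  exact hσa (X_pow_dvd_iff.mp (X_sq_dvd_apply_X_sub_X hpG hσ) 1 one_lt_two)

theorem eq_one_of_mem_ramificationSet {M : ℕ} (hM : ∀ j ∈ ramificationJumps G₀, j ≤ M)
    {σ : k⟦X⟧ ≃ₐ[k] k⟦X⟧} (hσ : σ ∈ ramificationSet G₀ (M + 1)) : σ = 1 := by
  have hmem : ∀ t, σ ∈ ramificationSet G₀ (M + 1 + t) := by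
    intro t
    induction t with
    | zero => exact hσ
    | succ t ih =>
      have hnot : ramificationSet G₀ (M + 1 + t) = ramificationSet G₀ (M + 1 + t + 1) := by
        by_contra h
        have := hM _ h
        omega
      rwa [← add_assoc, ← hnot]
  refine eq_one_of_apply_X_eq_X (sub_eq_zero.mp (eq_zero_of_forall_X_pow_dvd fun r => ?_))
  exact (pow_dvd_pow X (by omega)).trans (mem_ramificationSet_iff.mp (hmem r)).2

theorem modEq_of_mem_ramificationJumps {p : ℕ} [Fact p.Prime] [CharP k p]
    (hpG : IsPGroup p G₀) {a M : ℕ} (ha : a ∈ ramificationJumps G₀)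
    (hM : M ∈ ramificationJumps G₀) (hmax : ∀ j ∈ ramificationJumps G₀, j ≤ M) :
    a ≡ M [MOD p] := by
  obtain ⟨σ, hσG, hσ, hσa⟩ := exists_coeff_ne_zero_of_mem_ramificationJumps ha
  obtain ⟨τ, hτG, hτ, hτM⟩ := exists_coeff_ne_zero_of_mem_ramificationJumps hM
  have ha1 := one_le_of_mem_ramificationJumps hpG ha
  have hlead := X_pow_dvd_mul_apply_X_sub_mul_apply_X ha1
    (one_le_of_mem_ramificationJumps hpG hM) hσ hτ
  have hcomm : σ * τ = τ * σ := by
    have hdvd : X ^ (M + 2) ∣ (σ * τ) X - (τ * σ) X :=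
      (pow_dvd_pow X (by omega)).trans <| (dvd_sub_left (dvd_mul_left _ _)).mp <|
        (pow_dvd_pow X (a + M + 1).le_succ).trans hlead
    have hρ : σ * τ * (τ * σ)⁻¹ ∈ ramificationSet G₀ (M + 1) := by
      refine mem_ramificationSet_iff.mpr ⟨mul_mem (mul_mem hσG hτG) (inv_mem (mul_mem hτG hσG)), ?_⟩
      simpa [AlgEquiv.mul_apply] using
        X_pow_dvd_map_sub_map (X_dvd_apply_X (τ * σ)) hdvd ((τ * σ)⁻¹ X)
    exact mul_inv_eq_one.mp (eq_one_of_mem_ramificationSet hmax hρ)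
  rw [hcomm, sub_self, zero_sub, dvd_neg] at hlead
  have hcoeff := X_pow_dvd_iff.mp hlead (a + M + 1) (by omega)
  rw [coeff_C_mul_X_pow, if_pos rfl, mul_eq_zero, mul_eq_zero, sub_eq_zero] at hcoeff
  exact ((CharP.natCast_eq_natCast k p).mp (hcoeff.resolve_right hτM |>.resolve_right hσa)).symm

end Ramification

theorem stmt0_general {k : Type*} [Field k] (p : ℕ) [Fact p.Prime] [CharP k p]
    (G₀ : Subgroup (PowerSeries k ≃ₐ[k] PowerSeries k))
    (hpG : IsPGroup p G₀)
    (n : ℕ) (m : Fin n → ℕ)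
    (hrange : Set.range m = ramificationJumps G₀) :
    ∀ i j : Fin n, m i ≡ m j [MOD p] := by
  intro i j
  obtain ⟨l, -, hl⟩ := Finset.exists_max_image Finset.univ m ⟨i, Finset.mem_univ i⟩
  have hjump : ∀ t, m t ∈ ramificationJumps G₀ := fun t => hrange ▸ ⟨t, rfl⟩
  have hmax : ∀ a ∈ ramificationJumps G₀, a ≤ m l := by
    rintro a ha
    obtain ⟨t, rfl⟩ := hrange ▸ ha
    exact hl t (Finset.mem_univ t)
  have hmod (t : Fin n) : m t ≡ m l [MOD p] :=
    modEq_of_mem_ramificationJumps hpG (hjump t) (hjump l) hmax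
  exact (hmod i).trans (hmod j).symm

/-- If `G₀` is a nontrivial finite `p`-subgroup of `Aut_k(k[[x]])` with ramification jumps
`m 0 < m 1 < ... < m (n-1)`, then all the jumps are congruent modulo `p`
(i.e. `m j ≡ m 0 (mod p)` for all `j`). -/
theorem stmt0 {k : Type*} [Field k] [IsAlgClosed k] (p : ℕ) [Fact p.Prime] [CharP k p]
    (G₀ : Subgroup (PowerSeries k ≃ₐ[k] PowerSeries k)) [Finite G₀]
    (hnt : G₀ ≠ ⊥) (hpG : IsPGroup p G₀)
    (n : ℕ) (m : Fin n → ℕ) (hmono : StrictMono m)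
    (hrange : Set.range m = ramificationJumps G₀) :
    ∀ i j : Fin n, m i ≡ m j [MOD p] :=
  stmt0_general p G₀ hpG n m hrange
end

section
/- Let k be a field of characteristic p > 0 and let m be a positive integer prime to p. There exists a unique k-algebra automorphism σ of k[[x]] such that σ(x)^m · (1 + x^m) = x^m and σ(x) ≡ x (mod x² k[[x]]) (informally, σ(x) = x/(1+x^m)^{1/m}). This σ satisfies σ^p = id, and for every i with 1 ≤ i ≤ p−1 one has ν_x(σ^i(x) − x) = m + 1; in particular σ generates an action of Z/pZ on k[[x]] with conductor m. -/
/-!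
In the coordinate `t = x⁻ᵐ` the defining relation of `σ` reads `σ(t) = t + 1`. Accordingly, for
every `c : k` there is a unique `g_c ≡ x (mod x²)` with `g_cᵐ (1 + c xᵐ) = xᵐ` (the `m`-th root
exists by Hensel's lemma, `k⟦x⟧` being `x`-adically complete, and is unique since `m` is invertible),
and substituting `g_c` into `g_d` gives `g_{c+d}`. An algebra endomorphism of `k⟦x⟧` is determined
by the image of `x`, so `σⁱ` is the substitution of `g_i`: hence `σᵖ = id` because `p = 0` in `k`,
and `g_i - x = x ((1 + i xᵐ)^(-1/m) - 1)` has order `m + 1` because `i ≠ 0` in `k`.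
-/

namespace PowerSeries

variable {R : Type*} [CommRing R] {m : ℕ} {c d : R} {g g' u v : R⟦X⟧}

theorem algHom_ext_of_X {φ ψ : R⟦X⟧ →ₐ[R] R⟦X⟧} (h0 : constantCoeff (φ X) = 0)
    (h : φ X = ψ X) : φ = ψ := by
  have hpoly : ∀ P : Polynomial R, φ P = ψ P := by
    intro P
    have : φ.comp (Polynomial.coeToPowerSeries.algHom R) =
        ψ.comp (Polynomial.coeToPowerSeries.algHom R) :=
      Polynomial.algHom_ext (by simpa using h)
    simpa using DFunLike.congr_fun this P
  ext f n
  have hdvd : X ^ (n + 1) ∣ φ f - ψ f := by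
    rw [eq_X_pow_mul_shift_add_trunc (n + 1) f]
    simp only [map_add, map_mul, map_pow, hpoly, h, add_sub_add_right_eq_sub, ← mul_sub]
    exact (pow_dvd_pow_of_dvd (X_dvd_iff.mpr (h ▸ h0)) _).mul_right _
  simpa [sub_eq_zero] using X_pow_dvd_iff.mp hdvd n n.lt_succ_self

theorem exists_algHom_X_eq (hg : constantCoeff g = 0) :
    ∃ φ : R⟦X⟧ →ₐ[R] R⟦X⟧, φ X = g :=
  ⟨substAlgHom (HasSubst.of_constantCoeff_zero' hg), substAlgHom_X _⟩

theorem exists_pow_eq_of_constantCoeff_eq_one (hm : IsUnit (m : R))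
    (hu : constantCoeff u = 1) : ∃ w : R⟦X⟧, constantCoeff w = 1 ∧ w ^ m = u := by
  rcases Nat.eq_zero_or_pos m with rfl | hm0
  · have : Subsingleton R := subsingleton_of_zero_eq_one (by simpa using hm)
    exact ⟨u, hu, Subsingleton.elim _ _⟩
  have hroot₀ : (Polynomial.X ^ m - Polynomial.C u).eval 1 ∈ Ideal.span {(X : R⟦X⟧)} := by
    simp [Ideal.mem_span_singleton, X_dvd_iff, hu]
  have hsimple : IsUnit (Ideal.Quotient.mk (Ideal.span {(X : R⟦X⟧)})
      ((Polynomial.X ^ m - Polynomial.C u).derivative.eval 1)) := by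
    have hm' : IsUnit (m : R⟦X⟧) := by simpa using hm.map (C (R := R))
    simpa [Polynomial.derivative_X_pow] using hm'.map (Ideal.Quotient.mk _)
  obtain ⟨w, hroot, hw⟩ := HenselianRing.is_henselian _
    (Polynomial.monic_X_pow_sub_C u hm0.ne') 1 hroot₀ hsimple
  refine ⟨w, ?_, ?_⟩
  · rw [Ideal.mem_span_singleton, X_dvd_iff] at hw
    simpa [sub_eq_zero] using hw
  · simpa [sub_eq_zero] using hroot

theorem X_sq_dvd_sub_X_iff :
    X ^ 2 ∣ g - X ↔ ∃ u : R⟦X⟧, constantCoeff u = 1 ∧ g = X * u := by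
  constructor
  · rintro ⟨h, hh⟩
    exact ⟨1 + X * h, by simp, by linear_combination hh⟩
  · rintro ⟨u, hu, rfl⟩
    have : X ∣ u - 1 := X_dvd_iff.mpr (by simp [hu])
    simpa [pow_two, mul_sub] using mul_dvd_mul_left X this

theorem order_pow_sub_pow [NoZeroDivisors R] (hm : (m : R) ≠ 0)
    (hu : constantCoeff u = 1) (hv : constantCoeff v = 1) :
    (u ^ m - v ^ m).order = (u - v).order := by
  have hS : (∑ i ∈ Finset.range m, u ^ i * v ^ (m - 1 - i)).order = 0 := by
    rw [← not_ne_iff, order_ne_zero_iff_constCoeff_eq_zero]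
    simpa [map_sum, hu, hv] using hm
  rw [← geom_sum₂_mul, order_mul, hS, zero_add]

/-- `g = X (1 + c Xᵐ)^(-1/m)`, normalized by `g ≡ X mod X²`. -/
def IsShift (m : ℕ) (c : R) (g : R⟦X⟧) : Prop :=
  g ^ m * (1 + c • X ^ m) = X ^ m ∧ X ^ 2 ∣ g - X

theorem isShift_zero_X : IsShift m (0 : R) X := by
  simp [IsShift]

theorem isShift_X_mul (hu : constantCoeff u = 1) (h : u ^ m * (1 + c • X ^ m) = 1) :
    IsShift m c (X * u) :=
  ⟨by rw [mul_pow, mul_assoc, h, mul_one], X_sq_dvd_sub_X_iff.mpr ⟨u, hu, rfl⟩⟩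

namespace IsShift

theorem constantCoeff_eq_zero (hg : IsShift m c g) : constantCoeff g = 0 := by
  obtain ⟨u, -, rfl⟩ := X_sq_dvd_sub_X_iff.mp hg.2
  simp

theorem map {F : Type*} [FunLike F R⟦X⟧ R⟦X⟧] [AlgHomClass F R R⟦X⟧ R⟦X⟧] {φ : F}
    (hφ : IsShift m c (φ X)) (hg : IsShift m d g) : IsShift m (c + d) (φ g) := by
  constructor
  · have h := congrArg φ hg.1
    simp only [map_mul, map_add, map_one, map_pow, map_smul] at h
    have hφ₁ := hφ.1
    simp only [smul_eq_C_mul, map_add] at h hφ₁ ⊢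
    linear_combination (1 + C c * X ^ m) * h + (1 - C d * φ g ^ m) * hφ₁
  · obtain ⟨h, hh⟩ := hg.2
    have hX : X ∣ φ X := X_dvd_iff.mpr hφ.constantCoeff_eq_zero
    have : φ g - X = φ X ^ 2 * φ h + (φ X - X) := by
      rw [← map_pow, ← map_mul, ← hh, map_sub]
      ring
    rw [this]
    exact dvd_add ((pow_dvd_pow_of_dvd hX 2).mul_right _) hφ.2

theorem pow {σ : R⟦X⟧ ≃ₐ[R] R⟦X⟧} (hσ : IsShift m c (σ X)) (n : ℕ) :
    IsShift m (n • c) ((σ ^ n) X) := by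
  induction n with
  | zero => simpa using isShift_zero_X
  | succ n ih =>
    rw [pow_succ, AlgEquiv.mul_apply, succ_nsmul]
    exact ih.map hσ

end IsShift

theorem exists_isShift [Nontrivial R] (hm : IsUnit (m : R)) (c : R) :
    ∃ g : R⟦X⟧, IsShift m c g := by
  have hm0 : m ≠ 0 := by rintro rfl; simp at hm
  have hA : constantCoeff (1 + c • X ^ m : R⟦X⟧) = ((1 : Rˣ) : R) := by simp [hm0]
  obtain ⟨w, hw, hwm⟩ := exists_pow_eq_of_constantCoeff_eq_one hm
    (u := invOfUnit (1 + c • X ^ m) 1) (by simp [constantCoeff_invOfUnit])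
  exact ⟨X * w, isShift_X_mul hw (by rw [hwm, invOfUnit_mul _ _ hA])⟩

section IsDomain

variable [IsDomain R]

namespace IsShift

theorem exists_eq_X_mul (hg : IsShift m c g) :
    ∃ u, constantCoeff u = 1 ∧ g = X * u ∧ u ^ m * (1 + c • X ^ m) = 1 := by
  obtain ⟨u, hu, rfl⟩ := X_sq_dvd_sub_X_iff.mp hg.2
  refine ⟨u, hu, rfl, mul_left_cancel₀ (pow_ne_zero m X_ne_zero) ?_⟩
  rw [mul_one, ← mul_assoc, ← mul_pow, hg.1]

theorem unique (hm : (m : R) ≠ 0) (hg : IsShift m c g) (hg' : IsShift m c g') :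
    g = g' := by
  obtain ⟨u, hu, rfl, e⟩ := hg.exists_eq_X_mul
  obtain ⟨u', hu', rfl, e'⟩ := hg'.exists_eq_X_mul
  have hpow : u ^ m = u' ^ m := by linear_combination u' ^ m * e - u ^ m * e'
  have h := order_pow_sub_pow hm hu hu'
  rw [hpow, sub_self, order_zero, eq_comm, order_eq_top, sub_eq_zero] at h
  rw [h]

theorem order_sub_X (hm : (m : R) ≠ 0) (hc : c ≠ 0) (hg : IsShift m c g) :
    (g - X).order = ((m + 1 : ℕ) : ℕ∞) := by
  obtain ⟨u, hu, rfl, e⟩ := hg.exists_eq_X_mul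
  have hunit : (u ^ m).order = 0 :=
    order_zero_of_unit (isUnit_iff_constantCoeff.mpr (by simp [hu]))
  have h : (u - 1).order = m := by
    rw [← order_pow_sub_pow hm hu (map_one _), one_pow,
      show u ^ m - 1 = -(monomial m c * u ^ m) by
        rw [monomial_eq_C_mul_X_pow, ← smul_eq_C_mul]; linear_combination e,
      order_neg, order_mul, order_monomial_of_ne_zero _ _ hc, hunit, add_zero]
  rw [show X * u - X = X * (u - 1) by ring, order_mul, order_X, h, add_comm]
  norm_cast

theorem algHom_ext (hm : (m : R) ≠ 0) {φ ψ : R⟦X⟧ →ₐ[R] R⟦X⟧}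
    (hφ : IsShift m c (φ X)) (hψ : IsShift m c (ψ X)) : φ = ψ :=
  algHom_ext_of_X hφ.constantCoeff_eq_zero (hφ.unique hm hψ)

theorem algEquiv_ext (hm : (m : R) ≠ 0) {σ τ : R⟦X⟧ ≃ₐ[R] R⟦X⟧}
    (hσ : IsShift m c (σ X)) (hτ : IsShift m c (τ X)) : σ = τ :=
  AlgEquiv.coe_toAlgHom_injective (algHom_ext hm hσ hτ)

theorem comp_eq_id (hm : (m : R) ≠ 0) {φ ψ : R⟦X⟧ →ₐ[R] R⟦X⟧}
    (hφ : IsShift m c (φ X)) (hψ : IsShift m (-c) (ψ X)) : φ.comp ψ = AlgHom.id R R⟦X⟧ :=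
  algHom_ext hm (c := 0) (by simpa using hφ.map hψ) (by simpa using isShift_zero_X)

end IsShift

theorem exists_algEquiv_isShift (hm : IsUnit (m : R)) (c : R) :
    ∃ σ : R⟦X⟧ ≃ₐ[R] R⟦X⟧, IsShift m c (σ X) := by
  obtain ⟨g, hg⟩ := exists_isShift hm c
  obtain ⟨g', hg'⟩ := exists_isShift hm (-c)
  obtain ⟨φ, rfl⟩ := exists_algHom_X_eq hg.constantCoeff_eq_zero
  obtain ⟨ψ, rfl⟩ := exists_algHom_X_eq hg'.constantCoeff_eq_zero
  have hψφ : ψ.comp φ = AlgHom.id R R⟦X⟧ := hg'.comp_eq_id hm.ne_zero (by rwa [neg_neg])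
  exact ⟨.ofAlgHom φ ψ (hg.comp_eq_id hm.ne_zero hg') hψφ, hg⟩

end IsDomain

end PowerSeries

open PowerSeries

theorem stmt3_general {k : Type*} [Field k] (p : ℕ) [CharP k p]
    (m : ℕ) (hmp : ¬ p ∣ m) :
    (∃! σ : PowerSeries k ≃ₐ[k] PowerSeries k,
        (σ X) ^ m * (1 + X ^ m) = X ^ m ∧ X ^ 2 ∣ (σ X - X)) ∧
    ∀ σ : PowerSeries k ≃ₐ[k] PowerSeries k,
      (σ X) ^ m * (1 + X ^ m) = X ^ m → X ^ 2 ∣ (σ X - X) →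
        σ ^ p = 1 ∧
        ∀ i : ℕ, 1 ≤ i → i ≤ p - 1 → ((σ ^ i) X - X).order = ((m + 1 : ℕ) : ℕ∞) := by
  have hm : (m : k) ≠ 0 := by rwa [Ne, CharP.cast_eq_zero_iff k p]
  have isShift_one (σ : k⟦X⟧ ≃ₐ[k] k⟦X⟧) (h₁ : σ X ^ m * (1 + X ^ m) = X ^ m)
      (h₂ : X ^ 2 ∣ σ X - X) : IsShift m (1 : k) (σ X) := ⟨by rwa [one_smul], h₂⟩
  refine ⟨?_, fun σ h₁ h₂ => ?_⟩
  · obtain ⟨σ, hσ⟩ := exists_algEquiv_isShift hm.isUnit (1 : k)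
    exact ⟨σ, by simpa [IsShift] using hσ,
      fun τ hτ => (isShift_one τ hτ.1 hτ.2).algEquiv_ext hm hσ⟩
  have hσ := isShift_one σ h₁ h₂
  refine ⟨(hσ.pow p).algEquiv_ext hm ?_, fun i hi hip => (hσ.pow i).order_sub_X hm ?_⟩
  · simpa using isShift_zero_X
  · rw [nsmul_one, Ne, CharP.cast_eq_zero_iff k p]
    exact Nat.not_dvd_of_pos_of_lt hi (by omega)

/-- Let `k` be a field of characteristic `p > 0` and `m` a positive integer prime to `p`.
There is a unique `k`-algebra automorphism `σ` of `k[[x]]` with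
`σ(x)^m * (1 + x^m) = x^m` and `σ(x) ≡ x (mod x²)` (informally `σ(x) = x/(1+x^m)^{1/m}`);
it satisfies `σ^p = id`, and `ν_x(σ^i(x) - x) = m + 1` for `1 ≤ i ≤ p - 1`, so `σ`
generates an action of `ℤ/pℤ` on `k[[x]]` with conductor `m`. -/
theorem stmt3 {k : Type*} [Field k] (p : ℕ) [Fact p.Prime] [CharP k p]
    (m : ℕ) (hm : 0 < m) (hmp : ¬ p ∣ m) :
    (∃! σ : PowerSeries k ≃ₐ[k] PowerSeries k,
        (σ X) ^ m * (1 + X ^ m) = X ^ m ∧ X ^ 2 ∣ (σ X - X)) ∧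
    ∀ σ : PowerSeries k ≃ₐ[k] PowerSeries k,
      (σ X) ^ m * (1 + X ^ m) = X ^ m → X ^ 2 ∣ (σ X - X) →
        σ ^ p = 1 ∧
        ∀ i : ℕ, 1 ≤ i → i ≤ p - 1 → ((σ ^ i) X - X).order = ((m + 1 : ℕ) : ℕ∞) :=
  stmt3_general p m hmp
end

section
/- Let k be a field and R := k[[x,y]]/(xy). Let σ be a k-algebra automorphism of R that maps the ideal generated by the class of x into itself and the ideal generated by the class of y into itself (i.e., σ does not permute the branches). Then there exist unique power series P_0 ∈ x·k[[x]] and P_1 ∈ y·k[[y]] such that σ(x̄) = P_0(x̄) and σ(ȳ) = P_1(ȳ) in R, where x̄, ȳ denote the classes of x and y. -/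
/-!
A series divisible by `x` has no coefficients on the `y`-axis, and `xy` divides exactly the
series vanishing on both axes; so modulo `xy` such a series is its own restriction `P(x)` to the
`x`-axis, where `P(0) = 0`. Applied to `σ(x̄) ∈ (x̄)` and `σ(ȳ) ∈ (ȳ)` this gives `P₀` and `P₁`;
they are unique because the coefficients on the axes are well defined modulo `xy`.
-/

/-- The complete local ring `k[[x,y]]/(xy)` of an ordinary double point. -/
abbrev Node (k : Type*) [Field k] : Type _ :=
  MvPowerSeries (Fin 2) k ⧸
    (Ideal.span {(MvPowerSeries.X 0 * MvPowerSeries.X 1 : MvPowerSeries (Fin 2) k)})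

/-- The class `x̄` of `x` in `k[[x,y]]/(xy)`. -/
noncomputable def nodeX (k : Type*) [Field k] : Node k :=
  Ideal.Quotient.mk _ (MvPowerSeries.X 0)

/-- The class `ȳ` of `y` in `k[[x,y]]/(xy)`. -/
noncomputable def nodeY (k : Type*) [Field k] : Node k :=
  Ideal.Quotient.mk _ (MvPowerSeries.X 1)

/-- The embedding `k[[x]] → k[[x,y]]` sending a univariate power series `P` to `P(x)`,
so that the class of `emb0 P` in `k[[x,y]]/(xy)` is the evaluation `P(x̄)`. -/
noncomputable def emb0 {k : Type*} [Field k] (P : PowerSeries k) : MvPowerSeries (Fin 2) k :=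
  fun d => if d 1 = 0 then PowerSeries.coeff (d 0) P else 0

/-- The embedding `k[[y]] → k[[x,y]]`, `P ↦ P(y)`. -/
noncomputable def emb1 {k : Type*} [Field k] (P : PowerSeries k) : MvPowerSeries (Fin 2) k :=
  fun d => if d 0 = 0 then PowerSeries.coeff (d 1) P else 0

namespace MvPowerSeries

variable {σ R : Type*} [Semiring R]

theorem X_mul_X_dvd_iff {i j : σ} (hij : i ≠ j) {f : MvPowerSeries σ R} :
    X i * X j ∣ f ↔ ∀ d : σ →₀ ℕ, d i = 0 ∨ d j = 0 → coeff d f = 0 := by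
  constructor
  · rintro h d (hd | hd)
    · exact X_dvd_iff.mp (dvd_trans (dvd_mul_right _ _) h) d hd
    · exact X_dvd_iff.mp (dvd_trans ⟨X i, X_mul⟩ h) d hd
  · intro h
    obtain ⟨g, rfl⟩ : X j ∣ f := X_dvd_iff.mpr fun d hd => h d (Or.inr hd)
    -- the coefficient of `g` at `d` is that of `X j * g` at `single j 1 + d`
    obtain ⟨g', rfl⟩ : X i ∣ g := X_dvd_iff.mpr fun d hd => by
      have := h (Finsupp.single j 1 + d) (Or.inl (by simp [hd, hij]))
      rwa [X_def, coeff_add_monomial_mul, one_mul] at this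
    exact ⟨g', by rw [← mul_assoc, X_mul, mul_assoc, X_mul, mul_assoc]⟩

end MvPowerSeries

theorem Finsupp.fin_two_eq_single_of_apply_eq_zero {i j : Fin 2} (hij : i ≠ j) {d : Fin 2 →₀ ℕ}
    (hd : d j = 0) : d = Finsupp.single i (d i) := by
  ext l
  rcases (by omega : l = i ∨ l = j) with rfl | rfl
  · simp
  · simp [hd, hij.symm]

section

open MvPowerSeries

variable {k : Type*} [Field k]

theorem Node.mk_eq_mk_iff {f g : MvPowerSeries (Fin 2) k} :
    (Ideal.Quotient.mk _ f : Node k) = Ideal.Quotient.mk _ g ↔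
      ∀ d : Fin 2 →₀ ℕ, (∃ l, d l = 0) → coeff d f = coeff d g := by
  simp only [Ideal.Quotient.eq, Ideal.mem_span_singleton, X_mul_X_dvd_iff zero_ne_one,
    Fin.exists_fin_two, map_sub, sub_eq_zero]

/-- `P(X i)`, where `j` is the other variable: `emb0 = ofAxis 0 1` and `emb1 = ofAxis 1 0`. -/
noncomputable def ofAxis (i j : Fin 2) (P : PowerSeries k) : MvPowerSeries (Fin 2) k :=
  fun d => if d j = 0 then PowerSeries.coeff (d i) P else 0

theorem coeff_ofAxis (i j : Fin 2) (P : PowerSeries k) (d : Fin 2 →₀ ℕ) :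
    coeff d (ofAxis i j P) = if d j = 0 then PowerSeries.coeff (d i) P else 0 :=
  rfl

theorem Node.mk_ofAxis_injective {i j : Fin 2} (hij : i ≠ j) :
    Function.Injective fun P : PowerSeries k => (Ideal.Quotient.mk _ (ofAxis i j P) : Node k) := by
  intro P Q h
  ext n
  have := Node.mk_eq_mk_iff.mp h (Finsupp.single i n) ⟨j, by simp [hij.symm]⟩
  simpa [coeff_ofAxis, hij.symm] using this

theorem Node.exists_eq_mk_ofAxis {i j : Fin 2} (hij : i ≠ j) {a : Node k}
    (ha : a ∈ Ideal.span {Ideal.Quotient.mk _ (X i)}) :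
    ∃ P : PowerSeries k, PowerSeries.constantCoeff P = 0 ∧
      a = Ideal.Quotient.mk _ (ofAxis i j P) := by
  obtain ⟨r, rfl⟩ := Ideal.mem_span_singleton'.mp ha
  obtain ⟨g, rfl⟩ := Ideal.Quotient.mk_surjective r
  have hXg : ∀ d : Fin 2 →₀ ℕ, d i = 0 → coeff d (g * X i) = 0 :=
    X_dvd_iff.mp (dvd_mul_left _ _)
  refine ⟨PowerSeries.mk fun n => coeff (Finsupp.single i n) (g * X i), by simp [hXg 0 rfl],
    ?_⟩
  rw [← map_mul, Node.mk_eq_mk_iff]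
  rintro d ⟨l, hl⟩
  by_cases hdj : d j = 0
  · rw [coeff_ofAxis, if_pos hdj, PowerSeries.coeff_mk,
      ← Finsupp.fin_two_eq_single_of_apply_eq_zero hij hdj]
  · have hlj : l ≠ j := by rintro rfl; exact hdj hl
    obtain rfl : l = i := by omega
    rw [coeff_ofAxis, if_neg hdj, hXg d hl]

end

/-- Let `σ` be a `k`-algebra automorphism of `R = k[[x,y]]/(xy)` mapping the ideal `(x̄)`
into itself and the ideal `(ȳ)` into itself (i.e. not permuting the branches).  Then there
are unique power series `P₀ ∈ x·k[[x]]` and `P₁ ∈ y·k[[y]]` with `σ(x̄) = P₀(x̄)` and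
`σ(ȳ) = P₁(ȳ)`. -/
theorem stmt9 {k : Type*} [Field k] (σ : Node k ≃ₐ[k] Node k)
    (hx : ∀ a ∈ Ideal.span {nodeX k}, σ a ∈ Ideal.span {nodeX k})
    (hy : ∀ a ∈ Ideal.span {nodeY k}, σ a ∈ Ideal.span {nodeY k}) :
    ∃! PQ : PowerSeries k × PowerSeries k,
      PowerSeries.constantCoeff PQ.1 = 0 ∧ PowerSeries.constantCoeff PQ.2 = 0 ∧
      σ (nodeX k) = Ideal.Quotient.mk _ (emb0 PQ.1) ∧
      σ (nodeY k) = Ideal.Quotient.mk _ (emb1 PQ.2) := by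
  obtain ⟨P₀, hP₀, hσx⟩ := Node.exists_eq_mk_ofAxis (j := 1) zero_ne_one
    (hx _ (Ideal.mem_span_singleton_self _))
  obtain ⟨P₁, hP₁, hσy⟩ := Node.exists_eq_mk_ofAxis (j := 0) one_ne_zero
    (hy _ (Ideal.mem_span_singleton_self _))
  refine ⟨(P₀, P₁), ⟨hP₀, hP₁, hσx, hσy⟩, ?_⟩
  rintro ⟨Q₀, Q₁⟩ ⟨-, -, hQ₀, hQ₁⟩
  rw [Prod.mk.injEq]
  exact ⟨Node.mk_ofAxis_injective zero_ne_one (hQ₀.symm.trans hσx),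
    Node.mk_ofAxis_injective one_ne_zero (hQ₁.symm.trans hσy)⟩
end

section
/- Let k be a field and R := k[[x,y]]/(xy) with x̄, ȳ the classes of x and y. For every k-derivation D : R → R there exist unique power series f ∈ x·k[[x]] and g ∈ y·k[[y]] such that D(x̄) = f(x̄) and D(ȳ) = g(ȳ); conversely, for every f ∈ x·k[[x]] and g ∈ y·k[[y]] there is a (unique) k-derivation D of R with D(x̄) = f(x̄) and D(ȳ) = g(ȳ). In other words, Der_k(R) is naturally identified with x·k[[x]]·∂x ⊕ y·k[[y]]·∂y. -/
/-!
Setting `y = 0`, resp. `x = 0`, gives two `k`-algebra maps `R → k[[X]]` which are jointly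
injective, since `(x) ∩ (y) = (xy)` in `k[[x,y]]`; so `R` is the fibre product
`k[[x]] ×_k k[[y]]` and identities in `R` can be checked on the two branches.
Applying `D` to `x̄ȳ = 0` gives `x̄ D(ȳ) + ȳ D(x̄) = 0`; on the branch `x = 0` this reads
`y · D(x̄)|_{x=0} = 0`, so `D(x̄)` lives on the `x`-branch alone and is `f(x̄)` for
`f = D(x̄)|_{y=0}`, with `f(0) = 0` because both branches agree at the node.
Conversely `f ∂ₓ + g ∂_y`, defined branchwise, is a derivation.
A derivation vanishing on `x̄` and `ȳ` maps `R` into `⋂ₙ (x̄, ȳ)ⁿ = 0`, which gives uniqueness.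
-/

open scoped PowerSeries

namespace Node

variable {k : Type*} [Field k]

def coordinate (i : Fin 2) : Unit ↪ Fin 2 := Function.Embedding.punit i

@[simp]
lemma coordinate_apply (i : Fin 2) (u : Unit) : coordinate i u = i := rfl

lemma eq_single_of_apply_eq_zero {i j : Fin 2} (hij : i ≠ j) {d : Fin 2 →₀ ℕ} (hd : d j = 0) :
    d = Finsupp.single i (d i) := by
  ext t
  fin_cases i <;> fin_cases j <;> fin_cases t <;> simp_all

lemma coeff_rename_coordinate {i j : Fin 2} (hij : i ≠ j) (P : k⟦X⟧) (d : Fin 2 →₀ ℕ) :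
    MvPowerSeries.coeff d (MvPowerSeries.rename (coordinate i) P) =
      if d j = 0 then PowerSeries.coeff (d i) P else 0 := by
  split_ifs with hd
  · have := MvPowerSeries.coeff_embDomain_rename (coordinate i) P (Finsupp.single () (d i))
    rwa [Finsupp.embDomain_single, coordinate_apply, ← eq_single_of_apply_eq_zero hij hd] at this
  · refine MvPowerSeries.coeff_rename_eq_zero _ _ ?_
    rintro ⟨e, rfl⟩
    exact hd (Finsupp.mapDomain_of_notMem_range _ _ (by rintro ⟨_, rfl⟩; exact hij rfl))

lemma emb0_eq_rename (P : k⟦X⟧) : emb0 P = MvPowerSeries.rename (coordinate 0) P := by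
  ext d
  rw [coeff_rename_coordinate zero_ne_one]
  rfl

lemma emb1_eq_rename (P : k⟦X⟧) : emb1 P = MvPowerSeries.rename (coordinate 1) P := by
  ext d
  rw [coeff_rename_coordinate one_ne_zero]
  rfl

lemma killCompl_X_coordinate (i : Fin 2) :
    MvPowerSeries.killCompl (R := k) (coordinate i) (MvPowerSeries.X i) = PowerSeries.X :=
  MvPowerSeries.killCompl_X (e := coordinate i) ()

lemma killCompl_X_coordinate_of_ne {i j : Fin 2} (hij : i ≠ j) :
    MvPowerSeries.killCompl (R := k) (coordinate i) (MvPowerSeries.X j) = 0 :=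
  MvPowerSeries.killCompl_X_eq_zero (by rintro ⟨_, rfl⟩; exact hij rfl)

lemma X_dvd_of_killCompl_eq_zero {i j : Fin 2} (hij : i ≠ j) {F : MvPowerSeries (Fin 2) k}
    (hF : MvPowerSeries.killCompl (coordinate i) F = 0) : MvPowerSeries.X j ∣ F := by
  refine MvPowerSeries.X_dvd_iff.mpr fun d hd => ?_
  have := congr(MvPowerSeries.coeff (Finsupp.single () (d i)) $hF)
  rw [eq_single_of_apply_eq_zero hij hd]
  simpa [MvPowerSeries.coeff_killCompl, Finsupp.embDomain_single] using this

/-- `restrict 0` sets `y = 0` and `restrict 1` sets `x = 0`. -/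
noncomputable def restrict (i : Fin 2) : Node k →ₐ[k] k⟦X⟧ :=
  Ideal.Quotient.liftₐ _ (MvPowerSeries.killCompl (coordinate i)) fun a ha => by
    obtain ⟨b, rfl⟩ := Ideal.mem_span_singleton'.mp ha
    fin_cases i <;> simp [killCompl_X_coordinate_of_ne]

lemma restrict_mk (i : Fin 2) (F : MvPowerSeries (Fin 2) k) :
    restrict i (Ideal.Quotient.mk _ F) = MvPowerSeries.killCompl (coordinate i) F :=
  rfl

noncomputable def incl (i : Fin 2) : k⟦X⟧ →ₐ[k] Node k :=
  (Ideal.Quotient.mkₐ k _).comp (MvPowerSeries.rename (coordinate i))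

lemma mk_emb0 (P : k⟦X⟧) : Ideal.Quotient.mk _ (emb0 P) = incl 0 P := by
  rw [emb0_eq_rename]; rfl

lemma mk_emb1 (P : k⟦X⟧) : Ideal.Quotient.mk _ (emb1 P) = incl 1 P := by
  rw [emb1_eq_rename]; rfl

lemma nodeX_eq : nodeX k = incl 0 PowerSeries.X := by
  simp [incl, nodeX, PowerSeries.X]

lemma nodeY_eq : nodeY k = incl 1 PowerSeries.X := by
  simp [incl, nodeY, PowerSeries.X]

@[simp]
lemma restrict_incl_self (i : Fin 2) (P : k⟦X⟧) : restrict i (incl i P) = P :=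
  MvPowerSeries.killCompl_rename_app P

lemma restrict_incl_of_ne {i j : Fin 2} (hij : i ≠ j) (P : k⟦X⟧) :
    restrict j (incl i P) = PowerSeries.C (PowerSeries.constantCoeff P) := by
  ext n
  change MvPowerSeries.coeff (Finsupp.single () n)
    (MvPowerSeries.killCompl (coordinate j) (MvPowerSeries.rename (coordinate i) P)) = _
  rw [MvPowerSeries.coeff_killCompl, Finsupp.embDomain_single, coordinate_apply,
    coeff_rename_coordinate hij, PowerSeries.coeff_C]
  rcases eq_or_ne n 0 with rfl | hn
  · simp
  · simp [hn]

lemma constantCoeff_restrict_mk (i : Fin 2) (F : MvPowerSeries (Fin 2) k) :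
    PowerSeries.constantCoeff (restrict i (Ideal.Quotient.mk _ F)) =
      MvPowerSeries.constantCoeff F := by
  rw [← PowerSeries.coeff_zero_eq_constantCoeff_apply,
    ← MvPowerSeries.coeff_zero_eq_constantCoeff_apply]
  change MvPowerSeries.coeff (Finsupp.single () 0) (MvPowerSeries.killCompl (coordinate i) F) = _
  rw [MvPowerSeries.coeff_killCompl, Finsupp.single_zero, Finsupp.embDomain_zero]

lemma constantCoeff_restrict (i j : Fin 2) (r : Node k) :
    PowerSeries.constantCoeff (restrict i r) = PowerSeries.constantCoeff (restrict j r) := by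
  obtain ⟨F, rfl⟩ := Ideal.Quotient.mk_surjective r
  rw [constantCoeff_restrict_mk, constantCoeff_restrict_mk]

@[ext]
lemma ext {r s : Node k} (h : ∀ i, restrict i r = restrict i s) : r = s := by
  obtain ⟨F, hF⟩ := Ideal.Quotient.mk_surjective (r - s)
  have hF0 (i : Fin 2) : MvPowerSeries.killCompl (coordinate i) F = 0 := by
    rw [← restrict_mk, hF, map_sub, h i, sub_self]
  obtain ⟨G, rfl⟩ := X_dvd_of_killCompl_eq_zero zero_ne_one (hF0 0)
  have hG : MvPowerSeries.killCompl (coordinate 1) G = 0 := by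
    simpa [killCompl_X_coordinate, PowerSeries.X_ne_zero] using hF0 1
  obtain ⟨H, rfl⟩ := X_dvd_of_killCompl_eq_zero one_ne_zero hG
  rw [← sub_eq_zero, ← hF, Ideal.Quotient.eq_zero_iff_mem]
  exact Ideal.mem_span_singleton'.mpr ⟨H, by ring⟩

lemma restrict_incl_X_of_ne {i j : Fin 2} (hij : i ≠ j) :
    restrict j (incl i PowerSeries.X) = (0 : k⟦X⟧) := by
  simp [restrict_incl_of_ne hij]

lemma X_dvd_restrict_incl {P : k⟦X⟧} (hP : PowerSeries.constantCoeff P = 0) (i j : Fin 2) :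
    PowerSeries.X ∣ restrict j (incl i P) := by
  rw [PowerSeries.X_dvd_iff, constantCoeff_restrict j i, restrict_incl_self, hP]

lemma incl_X_mul_incl_X {i j : Fin 2} (hij : i ≠ j) :
    incl i PowerSeries.X * incl j (PowerSeries.X : k⟦X⟧) = 0 := by
  refine ext fun l => ?_
  have : l = i ∨ l = j := by omega
  rcases this with rfl | rfl <;> simp [restrict_incl_X_of_ne, hij, hij.symm]

lemma constantCoeff_restrict_eq_zero (i : Fin 2) {j : Fin 2} {a : Node k}
    (ha : restrict j a = 0) : PowerSeries.constantCoeff (restrict i a) = 0 := by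
  rw [constantCoeff_restrict i j, ha, map_zero]

lemma eq_incl_restrict_of_ne {i j : Fin 2} (hij : i ≠ j) {a : Node k} (ha : restrict j a = 0) :
    a = incl i (restrict i a) := by
  refine ext fun l => ?_
  have : l = i ∨ l = j := by omega
  rcases this with rfl | rfl
  · rw [restrict_incl_self]
  · rw [restrict_incl_of_ne hij, constantCoeff_restrict_eq_zero i ha, map_zero, ha]

lemma restrict_derivation_incl_X_of_ne (D : Derivation k (Node k) (Node k)) {i j : Fin 2}
    (hij : i ≠ j) : restrict j (D (incl i PowerSeries.X)) = 0 := by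
  have := congr(restrict j (D $(incl_X_mul_incl_X (k := k) hij)))
  simpa [restrict_incl_X_of_ne hij, PowerSeries.X_ne_zero] using this

lemma exists_eq_algebraMap_add_incl_X_mul (r : Node k) : ∃ (c : k) (u v : Node k),
    r = algebraMap k (Node k) c + incl 0 PowerSeries.X * u + incl 1 PowerSeries.X * v := by
  set c := PowerSeries.constantCoeff (restrict 0 r)
  obtain ⟨a, ha⟩ : PowerSeries.X ∣ restrict 0 r - PowerSeries.C c := by
    simp [PowerSeries.X_dvd_iff, c]
  obtain ⟨b, hb⟩ : PowerSeries.X ∣ restrict 1 r - PowerSeries.C c := by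
    simp [PowerSeries.X_dvd_iff, c, constantCoeff_restrict 1 0]
  refine ⟨c, incl 0 a, incl 1 b, ext fun i => ?_⟩
  fin_cases i
  · simp [restrict_incl_X_of_ne]
    linear_combination ha
  · simp [restrict_incl_X_of_ne]
    linear_combination hb

lemma derivation_eq_zero {E : Derivation k (Node k) (Node k)}
    (hE : ∀ i, E (incl i PowerSeries.X) = 0) : E = 0 := by
  -- `r = c + x̄ u + ȳ v` gives `E r = x̄ E u + ȳ E v`, so no continuity of `E` is needed.
  have hdvd (n : ℕ) : ∀ r i, PowerSeries.X ^ n ∣ restrict i (E r) := by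
    induction n with
    | zero => simp
    | succ n ih =>
      intro r i
      obtain ⟨c, u, v, rfl⟩ := exists_eq_algebraMap_add_incl_X_mul r
      simp only [map_add, E.map_algebraMap, E.leibniz, hE, smul_eq_mul, mul_zero, add_zero,
        zero_add, map_mul, pow_succ']
      exact dvd_add (mul_dvd_mul (X_dvd_restrict_incl PowerSeries.constantCoeff_X 0 i) (ih u i))
        (mul_dvd_mul (X_dvd_restrict_incl PowerSeries.constantCoeff_X 1 i) (ih v i))
  ext r i n
  simpa using PowerSeries.X_pow_dvd_iff.mp (hdvd (n + 1) r i) n n.lt_succ_self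

lemma derivation_ext {D₁ D₂ : Derivation k (Node k) (Node k)}
    (h : ∀ i, D₁ (incl i PowerSeries.X) = D₂ (incl i PowerSeries.X)) : D₁ = D₂ :=
  sub_eq_zero.mp (derivation_eq_zero fun i => by rw [Derivation.sub_apply, h i, sub_self])

noncomputable def vectorField (F : Fin 2 → k⟦X⟧) : Node k →ₗ[k] Node k :=
  ∑ i, (incl i).toLinearMap ∘ₗ LinearMap.mulLeft k (F i) ∘ₗ
    (PowerSeries.derivative k).toLinearMap ∘ₗ (restrict i).toLinearMap

lemma restrict_vectorField {F : Fin 2 → k⟦X⟧} (hF : ∀ i, PowerSeries.constantCoeff (F i) = 0)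
    (j : Fin 2) (r : Node k) :
    restrict j (vectorField F r) = F j * PowerSeries.derivative k (restrict j r) := by
  fin_cases j <;> simp [vectorField, restrict_incl_of_ne, hF]

noncomputable def derivationOf (F : Fin 2 → k⟦X⟧)
    (hF : ∀ i, PowerSeries.constantCoeff (F i) = 0) : Derivation k (Node k) (Node k) :=
  Derivation.mk' (vectorField F) fun a b => ext fun j => by
    simp only [restrict_vectorField hF, map_add, smul_eq_mul, map_mul, Derivation.leibniz]
    ring

lemma derivationOf_incl_X {F : Fin 2 → k⟦X⟧} (hF : ∀ i, PowerSeries.constantCoeff (F i) = 0)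
    (i : Fin 2) : derivationOf F hF (incl i PowerSeries.X) = incl i (F i) := by
  refine ext fun j => ?_
  rw [derivationOf, Derivation.coe_mk', restrict_vectorField hF]
  rcases eq_or_ne i j with rfl | hij
  · simp
  · simp [restrict_incl_of_ne hij, hF]

end Node

/-- `Der_k(k[[x,y]]/(xy)) ≅ x·k[[x]]·∂x ⊕ y·k[[y]]·∂y`:  every `k`-derivation `D` of
`R = k[[x,y]]/(xy)` satisfies `D(x̄) = f(x̄)`, `D(ȳ) = g(ȳ)` for unique `f ∈ x·k[[x]]`,
`g ∈ y·k[[y]]`; and conversely any such pair `(f, g)` arises from a unique `k`-derivation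
of `R`. -/
theorem stmt10 {k : Type*} [Field k] :
    (∀ D : Derivation k (Node k) (Node k),
      ∃! FG : PowerSeries k × PowerSeries k,
        PowerSeries.constantCoeff FG.1 = 0 ∧ PowerSeries.constantCoeff FG.2 = 0 ∧
        D (nodeX k) = Ideal.Quotient.mk _ (emb0 FG.1) ∧
        D (nodeY k) = Ideal.Quotient.mk _ (emb1 FG.2)) ∧
    (∀ f g : PowerSeries k,
      PowerSeries.constantCoeff f = 0 → PowerSeries.constantCoeff g = 0 →
      ∃! D : Derivation k (Node k) (Node k),
        D (nodeX k) = Ideal.Quotient.mk _ (emb0 f) ∧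
        D (nodeY k) = Ideal.Quotient.mk _ (emb1 g)) := by
  open Node in
  simp only [mk_emb0, mk_emb1, nodeX_eq, nodeY_eq]
  refine ⟨fun D => ?_, fun f g hf hg => ?_⟩
  · have hx := restrict_derivation_incl_X_of_ne D (zero_ne_one' (Fin 2))
    have hy := restrict_derivation_incl_X_of_ne D (one_ne_zero' (Fin 2))
    refine ⟨(restrict 0 (D (incl 0 PowerSeries.X)), restrict 1 (D (incl 1 PowerSeries.X))),
      ⟨constantCoeff_restrict_eq_zero 0 hx, constantCoeff_restrict_eq_zero 1 hy,
        eq_incl_restrict_of_ne zero_ne_one hx, eq_incl_restrict_of_ne one_ne_zero hy⟩, ?_⟩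
    rintro ⟨F, G⟩ ⟨-, -, hF, hG⟩
    simp [hF, hG]
  · have hF : ∀ i, PowerSeries.constantCoeff (![f, g] i) = 0 := Fin.forall_fin_two.mpr ⟨hf, hg⟩
    refine ⟨derivationOf ![f, g] hF,
      ⟨derivationOf_incl_X hF 0, derivationOf_incl_X hF 1⟩, fun D hD => derivation_ext ?_⟩
    simp [Fin.forall_fin_two, hD, derivationOf_incl_X]
end

section
/- Let k be a field of characteristic p > 0, let m be a positive integer prime to p with p | m + 1, and let σ be the k-algebra automorphism of k[[x]] of order p determined by σ(x)^m·(1 + x^m) = x^m and σ(x) ≡ x (mod x² k[[x]]). Set c := (m+1)/p, let g ∈ k[[x]] be the unique power series with g(0) = 1 and g^m = (1 − x^{m(p−1)})^c, and put f := g − 1 ∈ x·k[[x]]. Then for every integer i one has f·∂x − σ^i·(f·∂x) = −(∂x − σ^i·∂x) in Der_k(k[[x]]); in particular, the 1-cocycle φ_x : σ^i ↦ ∂x − σ^i·∂x is a coboundary with values in x·k[[x]]·∂x, hence its class in H¹(⟨σ⟩, x·k[[x]]·∂x) is zero. -/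
/-!
Write `S = σ x` and `u = 1 + x^m`. Differentiating `S^m u = x^m` gives `S'^m u^(m+1) = 1`, while in
characteristic `p` one has `(1 - S^(m(p-1))) u^p = 1 - x^(m(p-1))`. As `u^(m+1) = (u^p)^c`, both
`(g S')^m` and `(σ g)^m` equal `g^m u^(-(m+1))`, and since `m` is prime to `p` the `m`-th root with
constant term `1` is unique, so `σ g = g S'`. This says exactly that `σ⁻¹` fixes the derivation
`g ∂x` on `x`, hence everywhere, so all of `⟨σ⟩` fixes it; then `f ∂x = g ∂x - ∂x` is the required
coboundary.
-/

open PowerSeries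

namespace Derivation

variable {R A : Type*} [CommSemiring R] [CommSemiring A] [Algebra R A]

instance : MulAction (A ≃ₐ[R] A) (Derivation R A A) where
  smul σ D :=
    { toLinearMap := σ.toLinearMap ∘ₗ D.toLinearMap ∘ₗ σ.symm.toLinearMap
      map_one_eq_zero' := by simp
      leibniz' := fun a b => by simp [smul_eq_mul] }
  one_smul _ := rfl
  mul_smul _ _ _ := rfl

theorem algEquiv_smul_apply (σ : A ≃ₐ[R] A) (D : Derivation R A A) (a : A) :
    (σ • D) a = σ (D (σ.symm a)) := rfl

end Derivation

theorem one_sub_pow_mul_one_add_pow_char {A : Type*} [CommRing A] (p : ℕ) [Fact p.Prime]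
    [CharP A p] {m : ℕ} {s x : A} (h : s ^ m * (1 + x ^ m) = x ^ m) :
    (1 - s ^ (m * (p - 1))) * (1 + x ^ m) ^ p = 1 - x ^ (m * (p - 1)) := by
  obtain ⟨q, rfl⟩ : ∃ q, p = q + 1 := ⟨p - 1, (Nat.sub_add_cancel (Fact.out : p.Prime).one_le).symm⟩
  rw [Nat.add_sub_cancel]
  have h1 : s ^ (m * q) * (1 + x ^ m) ^ q = x ^ (m * q) := by
    rw [pow_mul, pow_mul, ← mul_pow, h]
  calc (1 - s ^ (m * q)) * (1 + x ^ m) ^ (q + 1)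
      = (1 + x ^ m) ^ (q + 1) - s ^ (m * q) * (1 + x ^ m) ^ q * (1 + x ^ m) := by ring
    _ = 1 + x ^ (m * q) * x ^ m - x ^ (m * q) * (1 + x ^ m) := by
        rw [h1, add_pow_char, one_pow, ← pow_mul, ← pow_add, mul_add_one]
    _ = 1 - x ^ (m * q) := by ring

namespace PowerSeries

variable {R : Type*} [CommRing R]

theorem derivation_eq_zero_of_apply_X {D : Derivation R R⟦X⟧ R⟦X⟧} (hX : D X = 0) : D = 0 := by
  have hpoly (P : Polynomial R) : D P = 0 := by
    have hP : (P : R⟦X⟧) = Polynomial.aeval X P := by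
      induction P using Polynomial.induction_on <;> simp_all
    rw [hP, D.map_aeval, hX, smul_zero]
  ext a n
  obtain ⟨r, hr⟩ : X ^ (n + 1) ∣ a - (trunc (n + 1) a : R⟦X⟧) :=
    X_pow_dvd_iff.mpr fun i hi => by simp [coeff_trunc, hi]
  have hXpow : D (X ^ (n + 1)) = 0 := by simpa using hpoly (Polynomial.X ^ (n + 1))
  rw [sub_eq_iff_eq_add.mp hr, map_add, hpoly, add_zero, D.leibniz, hXpow, smul_zero, add_zero,
    smul_eq_mul, coeff_X_pow_mul', if_neg (by omega), Derivation.zero_apply, map_zero]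

theorem derivation_ext {D₁ D₂ : Derivation R R⟦X⟧ R⟦X⟧} (h : D₁ X = D₂ X) : D₁ = D₂ :=
  sub_eq_zero.mp <| derivation_eq_zero_of_apply_X <| by rw [Derivation.sub_apply, h, sub_self]

theorem zpow_smul_smul_derivative_of_map_eq {σ : R⟦X⟧ ≃ₐ[R] R⟦X⟧} {g : R⟦X⟧}
    (h : σ g = g * d⁄dX R (σ X)) (i : ℤ) : (σ ^ i) • (g • d⁄dX R) = g • d⁄dX R := by
  have hinv : σ⁻¹ ∈ MulAction.stabilizer _ (g • d⁄dX R) := by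
    refine MulAction.mem_stabilizer_iff.mpr (derivation_ext ?_)
    rw [Derivation.algEquiv_smul_apply, Derivation.smul_apply, Derivation.smul_apply, smul_eq_mul,
      smul_eq_mul, derivative_X, mul_one]
    exact (σ.symm_apply_eq).mpr h.symm
  exact Subgroup.zpow_mem _ (inv_mem_iff.mp hinv) i

variable [IsDomain R]

theorem eq_of_pow_eq_pow_of_constantCoeff_eq_one {m : ℕ} (hm : (m : R) ≠ 0) {A B : R⟦X⟧}
    (hA : constantCoeff A = 1) (hB : constantCoeff B = 1) (h : A ^ m = B ^ m) : A = B := by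
  have hsum : constantCoeff (∑ i ∈ Finset.range m, A ^ i * B ^ (m - 1 - i)) = m := by
    simp [hA, hB]
  have hsum0 : ∑ i ∈ Finset.range m, A ^ i * B ^ (m - 1 - i) ≠ 0 := fun h0 => by
    rw [h0, map_zero] at hsum
    exact hm hsum.symm
  refine sub_eq_zero.mp ((mul_eq_zero.mp ?_).resolve_left hsum0)
  rw [geom_sum₂_mul, h, sub_self]

theorem derivative_pow_mul_one_add_X_pow_pow {m : ℕ} (hm : (m : R) ≠ 0) {S : R⟦X⟧}
    (hS : S ^ m * (1 + X ^ m) = X ^ m) : d⁄dX R S ^ m * (1 + X ^ m) ^ (m + 1) = 1 := by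
  have hm0 : m ≠ 0 := by rintro rfl; exact hm Nat.cast_zero
  obtain ⟨n, rfl⟩ : ∃ n, m = n + 1 := ⟨m - 1, by omega⟩
  have hmX : ((n + 1 : ℕ) : R⟦X⟧) ≠ 0 := by
    rwa [← map_natCast (C (R := R)), ne_eq, map_eq_zero_iff _ C_injective]
  have hdiff := congrArg (d⁄dX R) hS
  simp only [Derivation.leibniz, derivative_pow, map_add, derivative_one, derivative_X,
    smul_eq_mul, Nat.add_sub_cancel, mul_one, zero_add] at hdiff
  generalize hu_def : (1 + X ^ (n + 1) : R⟦X⟧) = u at hS hdiff ⊢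
  have hlin : S ^ n * d⁄dX R S * u ^ 2 = X ^ n := by
    have h : S ^ n * d⁄dX R S * u + S ^ (n + 1) * X ^ n = X ^ n :=
      mul_left_cancel₀ hmX (by linear_combination hdiff)
    linear_combination u * h - X ^ n * hS - X ^ n * hu_def
  have hXne : X ^ (n + 1) ≠ (0 : R⟦X⟧) := pow_ne_zero _ X_ne_zero
  have hS0 : S ≠ 0 := by rintro rfl; simp [hXne.symm] at hS
  have hu : u ≠ 0 := by rintro rfl; simp [hXne.symm] at hS
  apply mul_left_cancel₀ (mul_ne_zero (pow_ne_zero n (pow_ne_zero (n + 1) hS0)) (pow_ne_zero n hu))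
  calc (S ^ (n + 1)) ^ n * u ^ n * (d⁄dX R S ^ (n + 1) * u ^ (n + 1 + 1))
      = (S ^ n * d⁄dX R S * u ^ 2) ^ (n + 1) := by ring
    _ = (S ^ (n + 1) * u) ^ n := by rw [hlin, hS, ← pow_mul, ← pow_mul, mul_comm]
    _ = (S ^ (n + 1)) ^ n * u ^ n * 1 := by ring

theorem map_eq_mul_derivative_map_X {k : Type*} [Field k] (p : ℕ) [Fact p.Prime] [CharP k p]
    {m : ℕ} (hmp : ¬ p ∣ m) (hdvd : p ∣ m + 1) {F : Type*} [FunLike F k⟦X⟧ k⟦X⟧]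
    [RingHomClass F k⟦X⟧ k⟦X⟧] (σ : F) (hσ : σ X ^ m * (1 + X ^ m) = X ^ m)
    (hσX : X ^ 2 ∣ σ X - X) {g : k⟦X⟧} (hg1 : constantCoeff g = 1)
    (hg : g ^ m = (1 - X ^ (m * (p - 1))) ^ ((m + 1) / p)) :
    σ g = g * d⁄dX k (σ X) := by
  have hm : (m : k) ≠ 0 := fun h => hmp ((CharP.cast_eq_zero_iff k p m).mp h)
  have : CharP k⟦X⟧ p := charP_of_injective_algebraMap (algebraMap k k⟦X⟧).injective p
  obtain ⟨t, ht⟩ := hσX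
  rw [sub_eq_iff_eq_add] at ht
  have hσX0 : constantCoeff (σ X) = 0 := by simp [ht]
  have hdσX0 : constantCoeff (d⁄dX k (σ X)) = 1 := by simp [ht]
  have hσg0 : constantCoeff (σ g) = 1 := by
    obtain ⟨r, hr⟩ := X_dvd_iff.mpr (show constantCoeff (g - 1) = 0 by simp [hg1])
    rw [sub_eq_iff_eq_add.mp hr, map_add, map_mul, map_one]
    simp [hσX0]
  have hu : (1 + X ^ m : k⟦X⟧) ^ (m + 1) ≠ 0 := pow_ne_zero _ fun hu =>
    pow_ne_zero m (X_ne_zero (R := k)) (by simpa [hu] using hσ.symm)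
  refine eq_of_pow_eq_pow_of_constantCoeff_eq_one hm hσg0 (by simp [hg1, hdσX0])
    (mul_right_cancel₀ hu ?_)
  calc σ g ^ m * (1 + X ^ m) ^ (m + 1)
      = ((1 - σ X ^ (m * (p - 1))) * (1 + X ^ m) ^ p) ^ ((m + 1) / p) := by
        rw [← map_pow, hg, mul_pow, ← pow_mul, Nat.mul_div_cancel' hdvd]
        simp only [map_pow, map_sub, map_one]
    _ = g ^ m := by rw [one_sub_pow_mul_one_add_pow_char p hσ, hg]
    _ = (g * d⁄dX k (σ X)) ^ m * (1 + X ^ m) ^ (m + 1) := by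
        rw [mul_pow, mul_assoc, derivative_pow_mul_one_add_X_pow_pow hm hσ, mul_one]

end PowerSeries

theorem stmt12_general {k : Type*} [Field k] (p : ℕ) [Fact p.Prime] [CharP k p]
    (m : ℕ) (hmp : ¬ p ∣ m) (hdvd : p ∣ m + 1)
    (σ : PowerSeries k ≃ₐ[k] PowerSeries k)
    (hσ : (σ X) ^ m * (1 + X ^ m) = X ^ m) (hσ2 : X ^ 2 ∣ (σ X - X))
    (g : PowerSeries k) (hg1 : constantCoeff g = 1)
    (hg : g ^ m = (1 - X ^ (m * (p - 1))) ^ ((m + 1) / p))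
    (f : PowerSeries k) (hf : f = g - 1) :
    (∀ (i : ℤ) (a : PowerSeries k),
        f * derivativeFun a - (σ ^ i) (f * derivativeFun ((σ ^ i)⁻¹ a)) =
          -(derivativeFun a - (σ ^ i) (derivativeFun ((σ ^ i)⁻¹ a)))) ∧
    (∃ f₀ : PowerSeries k, constantCoeff f₀ = 0 ∧
        ∀ (i : ℤ) (a : PowerSeries k),
          derivativeFun a - (σ ^ i) (derivativeFun ((σ ^ i)⁻¹ a)) =
            f₀ * derivativeFun a - (σ ^ i) (f₀ * derivativeFun ((σ ^ i)⁻¹ a))) := by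
  have hinv (i : ℤ) (a : k⟦X⟧) : (σ ^ i) (g * d⁄dX k ((σ ^ i)⁻¹ a)) = g * d⁄dX k a :=
    DFunLike.congr_fun (zpow_smul_smul_derivative_of_map_eq
      (map_eq_mul_derivative_map_X p hmp hdvd σ hσ hσ2 hg1 hg) i) a
  have hcob (i : ℤ) (a : k⟦X⟧) :
      f * d⁄dX k a - (σ ^ i) (f * d⁄dX k ((σ ^ i)⁻¹ a)) =
        -(d⁄dX k a - (σ ^ i) (d⁄dX k ((σ ^ i)⁻¹ a))) := by
    subst hf
    simp only [sub_mul, one_mul, map_sub, hinv]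
    ring
  refine ⟨hcob, -f, by simp [hf, hg1], fun i a => ?_⟩
  -- `derivativeFun` is the function underlying `d⁄dX k`
  show d⁄dX k a - (σ ^ i) (d⁄dX k ((σ ^ i)⁻¹ a)) =
    -f * d⁄dX k a - (σ ^ i) (-f * d⁄dX k ((σ ^ i)⁻¹ a))
  simp only [neg_mul, map_neg]
  linear_combination hcob i a

/-- Let `k` have characteristic `p`, `m` a positive integer prime to `p` with `p ∣ m + 1`,
and `σ` the order-`p` automorphism of `k[[x]]` with `σ(x)^m (1 + x^m) = x^m`,
`σ(x) ≡ x (mod x²)`.  Put `c := (m+1)/p`, let `g` be the unique series with `g(0) = 1`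
and `g^m = (1 - x^{m(p-1)})^c`, and `f := g - 1 ∈ x·k[[x]]`.  Then
`f·∂x - σⁱ·(f·∂x) = -(∂x - σⁱ·∂x)` for every integer `i`; in particular the cocycle
`φ_x : σⁱ ↦ ∂x - σⁱ·∂x` is a coboundary with values in `x·k[[x]]·∂x`, hence has zero
class in `H¹(⟨σ⟩, x·k[[x]]·∂x)`. -/
theorem stmt12 {k : Type*} [Field k] (p : ℕ) [Fact p.Prime] [CharP k p]
    (m : ℕ) (hm : 0 < m) (hmp : ¬ p ∣ m) (hdvd : p ∣ m + 1)
    (σ : PowerSeries k ≃ₐ[k] PowerSeries k) (hord : orderOf σ = p)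
    (hσ : (σ X) ^ m * (1 + X ^ m) = X ^ m) (hσ2 : X ^ 2 ∣ (σ X - X))
    (g : PowerSeries k) (hg1 : constantCoeff g = 1)
    (hg : g ^ m = (1 - X ^ (m * (p - 1))) ^ ((m + 1) / p))
    (f : PowerSeries k) (hf : f = g - 1) :
    (∀ (i : ℤ) (a : PowerSeries k),
        f * derivativeFun a - (σ ^ i) (f * derivativeFun ((σ ^ i)⁻¹ a)) =
          -(derivativeFun a - (σ ^ i) (derivativeFun ((σ ^ i)⁻¹ a)))) ∧
    (∃ f₀ : PowerSeries k, constantCoeff f₀ = 0 ∧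
        ∀ (i : ℤ) (a : PowerSeries k),
          derivativeFun a - (σ ^ i) (derivativeFun ((σ ^ i)⁻¹ a)) =
            f₀ * derivativeFun a - (σ ^ i) (f₀ * derivativeFun ((σ ^ i)⁻¹ a))) :=
  stmt12_general p m hmp hdvd σ hσ hσ2 g hg1 hg f hf
end
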